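/- Let T_h^k be a perfect k-ary tree with k ≥ 3 and h ≥ 1. Then α_b(T_h^k) equals the independence number α(T_h^k); explicitly, α_b(T_h^k) = (k^{2(m+1)} − 1)/(k^2 − 1) if h = 2m is even, and α_b(T_h^k) = k · (k^{2(m+1)} − 1)/(k^2 − 1) if h = 2m + 1 is odd. -/

import Mathlib

variable {V : Type*}

/-- The eccentricity of a vertex: the maximum distance to any vertex. -/
noncomputable def ecc (G : SimpleGraph V) [Fintype V] (v : V) : ℕ :=
  Finset.univ.sup (fun u => G.dist u v)

/-- A broadcast on `G`: a function assigning each vertex a power at most its eccentricity. -/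
def IsBroadcast (G : SimpleGraph V) [Fintype V] (f : V → ℕ) : Prop :=
  ∀ v, f v ≤ ecc G v

/-- `u` hears the broadcasting vertex `v`. -/
def Hears (G : SimpleGraph V) (f : V → ℕ) (u v : V) : Prop :=
  0 < f v ∧ G.dist u v ≤ f v

/-- An independent broadcast: no broadcasting vertex hears another vertex. -/
def IsIndepBroadcast (G : SimpleGraph V) [Fintype V] (f : V → ℕ) : Prop :=
  IsBroadcast G f ∧ ∀ v w, 0 < f v → v ≠ w → ¬ Hears G f v w

/-- The broadcast independence number: the maximum weight of an independent broadcast. -/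
noncomputable def alphaB (G : SimpleGraph V) [Fintype V] : ℕ :=
  sSup {w | ∃ f, IsIndepBroadcast G f ∧ w = ∑ v, f v}

/-- Vertices of the perfect `k`-ary tree of height `h`: strings of length at most `h`
over a `k`-letter alphabet. -/
abbrev KVert (k h : ℕ) : Type := {l : List (Fin k) // l.length ≤ h}

noncomputable instance (k h : ℕ) : Fintype (KVert k h) :=
  (List.finite_length_le (Fin k) h).fintype

/-- The perfect `k`-ary tree of height `h`: each string of length less than `h` is
adjacent to its `k` one-letter extensions. -/
def karyTree (k h : ℕ) : SimpleGraph (KVert k h) where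
  Adj x y := (∃ a : Fin k, x.1 = a :: y.1) ∨ (∃ a : Fin k, y.1 = a :: x.1)
  symm := ⟨fun x y hxy => hxy.symm⟩
  loopless := ⟨by
    rintro x (⟨a, ha⟩ | ⟨a, ha⟩) <;>
    · have := congrArg List.length ha
      rw [List.length_cons] at this
      omega⟩

/-- A leaf of the perfect `k`-ary tree of height `h`: a string of length `h`. -/
def IsKLeaf (k h : ℕ) (v : KVert k h) : Prop := v.1.length = h

/-- The independence number: the maximum size of a set of pairwise non-adjacent vertices. -/
noncomputable def indepNum (G : SimpleGraph V) [Fintype V] : ℕ :=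
  sSup {n | ∃ s : Finset V, (∀ x ∈ s, ∀ y ∈ s, x ≠ y → ¬ G.Adj x y) ∧ n = s.card}

/-!
Let `E` be the set of vertices whose level has the parity of `h`. It is independent, and an
independent set is an independent broadcast of power one, so `|E| ≤ α ≤ α_b`.

Conversely, a vertex `v` broadcasting with power `p` claims the vertices of `E` that lie `t`
levels below its ancestor `j` levels up, where `j ≤ t`, `j + t ≤ p` and `p ≤ 2t + 1`; there are
`k ^ t ≥ 3 ^ t ≥ 2t + 1 ≥ p` of them. Claimed vertices are at least as deep as their claimant, so
a vertex claimed by both `u` and `v`, hanging off `v` by the shorter branch, would put `v` within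
`f u` of `u`. The claim sets are therefore disjoint, and `α_b ≤ |E|`.
-/

open Finset

section General

variable [Fintype V] {G : SimpleGraph V}

lemma isIndepBroadcast_zero : IsIndepBroadcast G 0 :=
  ⟨fun _ => Nat.zero_le _, fun _ _ h => absurd h (lt_irrefl 0)⟩

lemma bddAbove_broadcast_weights :
    BddAbove {w | ∃ f, IsIndepBroadcast G f ∧ w = ∑ v, f v} := by
  refine ⟨∑ v, ecc G v, ?_⟩
  rintro _ ⟨f, hf, rfl⟩
  exact sum_le_sum fun v _ => hf.1 v

lemma sum_le_alphaB {f : V → ℕ} (hf : IsIndepBroadcast G f) : ∑ v, f v ≤ alphaB G :=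
  le_csSup bddAbove_broadcast_weights ⟨f, hf, rfl⟩

lemma alphaB_le {n : ℕ} (h : ∀ f, IsIndepBroadcast G f → ∑ v, f v ≤ n) : alphaB G ≤ n :=
  csSup_le ⟨0, 0, isIndepBroadcast_zero, by simp⟩ fun _ ⟨f, hf, hw⟩ => hw ▸ h f hf

lemma card_le_indepNum {s : Finset V} (hs : ∀ x ∈ s, ∀ y ∈ s, x ≠ y → ¬ G.Adj x y) :
    #s ≤ indepNum G :=
  le_csSup ⟨Fintype.card V, fun _ ⟨t, _, ht⟩ => ht ▸ card_le_univ t⟩ ⟨s, hs, rfl⟩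

lemma one_le_ecc [Nontrivial V] (hG : G.Connected) (v : V) : 1 ≤ ecc G v := by
  obtain ⟨u, hu⟩ := exists_ne v
  exact (hG.pos_dist_of_ne hu).trans_le (le_sup (f := fun u => G.dist u v) (mem_univ u))

lemma indepNum_le_alphaB [Nontrivial V] (hG : G.Connected) : indepNum G ≤ alphaB G := by
  classical
  refine csSup_le ⟨0, ∅, by simp, rfl⟩ ?_
  rintro _ ⟨s, hs, rfl⟩
  let f : V → ℕ := fun v => if v ∈ s then 1 else 0
  have hf : IsIndepBroadcast G f := by
    refine ⟨fun v => ?_, fun v w hv hvw hw => ?_⟩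
    · by_cases hvs : v ∈ s <;> simp [f, hvs, one_le_ecc hG v]
    · have hvs : v ∈ s := by by_contra h; simp [f, h] at hv
      obtain ⟨hw0, hvw1⟩ := hw
      have hws : w ∈ s := by by_contra h; simp [f, h] at hw0
      have h1 : G.dist v w ≤ 1 := by simpa [f, hws] using hvw1
      have h2 : G.dist v w = 1 := le_antisymm h1 (hG.pos_dist_of_ne hvw)
      exact hs v hvs w hws hvw (SimpleGraph.dist_eq_one_iff_adj.mp h2)
  simpa [f, sum_ite_mem] using sum_le_alphaB hf

end General

namespace karyTree

variable {k h : ℕ}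

lemma nontrivial (hk : 0 < k) (hh : 1 ≤ h) : Nontrivial (KVert k h) :=
  ⟨⟨[], Nat.zero_le h⟩, ⟨[⟨0, hk⟩], hh⟩, by simp⟩

lemma length_eq_of_adj {v w : KVert k h} (hvw : (karyTree k h).Adj v w) :
    v.1.length = w.1.length + 1 ∨ w.1.length = v.1.length + 1 := by
  rcases hvw with ⟨a, ha⟩ | ⟨a, ha⟩ <;> simp [ha]

lemma exists_walk_of_eq_append {v w : KVert k h} {x : List (Fin k)} (hx : v.1 = x ++ w.1) :
    ∃ p : (karyTree k h).Walk v w, p.length = x.length := by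
  induction x generalizing v with
  | nil => exact ⟨SimpleGraph.Walk.nil.copy (Subtype.ext hx.symm) rfl, by simp⟩
  | cons a x ih =>
    have hlen : (x ++ w.1).length ≤ h := by have := v.2; simp [hx] at this ⊢; omega
    obtain ⟨p, hp⟩ := ih (v := ⟨x ++ w.1, hlen⟩) rfl
    have hadj : (karyTree k h).Adj v ⟨x ++ w.1, hlen⟩ := Or.inl ⟨a, hx⟩
    exact ⟨.cons hadj p, by simp [hp]⟩

lemma dist_le_of_eq_append {v w : KVert k h} {x : List (Fin k)} (hx : v.1 = x ++ w.1) :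
    (karyTree k h).dist v w ≤ x.length := by
  obtain ⟨p, hp⟩ := exists_walk_of_eq_append hx
  exact hp ▸ SimpleGraph.dist_le p

lemma dist_le_of_eq_drop {v w : KVert k h} {n : ℕ} (hn : w.1 = v.1.drop n) :
    (karyTree k h).dist v w ≤ n :=
  (dist_le_of_eq_append (x := v.1.take n) (by rw [hn, List.take_append_drop])).trans
    (List.length_take_le n v.1)

def root (k h : ℕ) : KVert k h := ⟨[], Nat.zero_le h⟩

lemma dist_root_le (v : KVert k h) : (karyTree k h).dist v (root k h) ≤ v.1.length :=
  dist_le_of_eq_append (List.append_nil v.1).symm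

lemma reachable_root (v : KVert k h) : (karyTree k h).Reachable v (root k h) :=
  (exists_walk_of_eq_append (w := root k h) (List.append_nil v.1).symm).elim fun p _ =>
    p.reachable

lemma connected : (karyTree k h).Connected :=
  (SimpleGraph.connected_iff _).2
    ⟨fun u v => (reachable_root u).trans (reachable_root v).symm, ⟨root k h⟩⟩

lemma ecc_le (v : KVert k h) : ecc (karyTree k h) v ≤ h + v.1.length := by
  refine Finset.sup_le fun u _ => ?_
  calc (karyTree k h).dist u v
      ≤ (karyTree k h).dist u (root k h) + (karyTree k h).dist (root k h) v :=
        connected.dist_triangle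
    _ ≤ u.1.length + v.1.length := by
        rw [SimpleGraph.dist_comm (u := root k h)]
        exact add_le_add (dist_root_le u) (dist_root_le v)
    _ ≤ h + v.1.length := by have := u.2; omega

lemma dist_le_of_append_drop_eq {u v : KVert k h} {x y : List (Fin k)} {i j : ℕ}
    (hj : j ≤ x.length) (hxy : x.length ≤ y.length) (he : x ++ v.1.drop j = y ++ u.1.drop i) :
    (karyTree k h).dist v u ≤ i + y.length := by
  -- `u.drop i` is an ancestor of `v`, at most `y.length` levels above it
  have hdrop : u.1.drop i = v.1.drop (j + (y.length - x.length)) := by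
    have := congrArg (List.drop y.length) he
    rw [List.drop_left, List.drop_append, List.drop_eq_nil_of_le hxy, List.nil_append,
      List.drop_drop] at this
    exact this.symm
  let m : KVert k h := ⟨u.1.drop i, by have := u.2; simp; omega⟩
  calc (karyTree k h).dist v u ≤ (karyTree k h).dist v m + (karyTree k h).dist m u :=
        connected.dist_triangle
    _ ≤ (j + (y.length - x.length)) + i := by
        rw [SimpleGraph.dist_comm (u := m)]
        exact add_le_add (dist_le_of_eq_drop hdrop) (dist_le_of_eq_drop rfl)
    _ ≤ i + y.length := by omega

noncomputable def evenHeight (k h : ℕ) : Finset (KVert k h) :=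
  {v | v.1.length % 2 = h % 2}

lemma mem_evenHeight {v : KVert k h} : v ∈ evenHeight k h ↔ v.1.length % 2 = h % 2 := by
  simp [evenHeight]

lemma not_adj_of_mem_evenHeight {v w : KVert k h} (hv : v ∈ evenHeight k h)
    (hw : w ∈ evenHeight k h) : ¬ (karyTree k h).Adj v w := fun hvw => by
  rw [mem_evenHeight] at hv hw
  rcases length_eq_of_adj hvw with hl | hl <;> omega

lemma card_evenHeight_le_indepNum : #(evenHeight k h) ≤ indepNum (karyTree k h) :=
  card_le_indepNum fun _ hv _ hw _ => not_adj_of_mem_evenHeight hv hw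

lemma card_level {t : ℕ} (ht : t ≤ h) : #{v : KVert k h | v.1.length = t} = k ^ t := by
  let e : {v : KVert k h // v.1.length = t} ≃ List.Vector (Fin k) t :=
    { toFun v := ⟨v.1.1, v.2⟩
      invFun l := ⟨⟨l.1, l.2.trans_le ht⟩, l.2⟩
      left_inv _ := rfl
      right_inv _ := rfl }
  rw [← Fintype.card_subtype, Fintype.card_congr e, card_vector, Fintype.card_fin]

lemma card_evenHeight (hk : 2 ≤ k) :
    #(evenHeight k h) = k ^ (h % 2) * ((k ^ (2 * (h / 2 + 1)) - 1) / (k ^ 2 - 1)) := by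
  have hfiber : ∀ i ∈ range (h / 2 + 1),
      #{v ∈ evenHeight k h | v.1.length / 2 = i} = k ^ (h % 2) * (k ^ 2) ^ i := by
    intro i hi
    rw [mem_range] at hi
    have hset : {v ∈ evenHeight k h | v.1.length / 2 = i} =
        univ.filter fun v : KVert k h => v.1.length = 2 * i + h % 2 := by
      ext v
      simp only [mem_filter, mem_evenHeight, mem_univ, true_and]
      omega
    rw [hset, card_level (by omega), ← pow_mul, ← pow_add, add_comm]
  rw [card_eq_sum_card_fiberwise (f := fun v => v.1.length / 2) (t := range (h / 2 + 1))
    fun v _ => mem_range.2 (Nat.lt_succ_of_le (Nat.div_le_div_right v.2)),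
    sum_congr rfl hfiber, ← mul_sum, Nat.geomSum_eq (by nlinarith), pow_mul]

/-- `w` lies `x.length` levels below the ancestor of `v` that is `j` levels up, at least as deep
as `v`, and within `p` steps of `v` along that route. -/
def Claims (p : ℕ) (v w : KVert k h) : Prop :=
  ∃ (x : List (Fin k)) (j : ℕ), j ≤ x.length ∧ j + x.length ≤ p ∧ w.1 = x ++ v.1.drop j

lemma not_claims_of_isIndepBroadcast {f : KVert k h → ℕ}
    (hf : IsIndepBroadcast (karyTree k h) f) {u v w : KVert k h} (huv : u ≠ v)
    (hu : 0 < f u) (hv : 0 < f v) (hwu : Claims (f u) u w) (hwv : Claims (f v) v w) : False := by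
  obtain ⟨y, i, hiy, hiu, hwy⟩ := hwu
  obtain ⟨x, j, hjx, hjv, hwx⟩ := hwv
  rcases le_total x.length y.length with hxy | hyx
  · exact hf.2 v u hv huv.symm
      ⟨hu, (dist_le_of_append_drop_eq hjx hxy (hwx.symm.trans hwy)).trans (by omega)⟩
  · exact hf.2 u v hu huv
      ⟨hv, (dist_le_of_append_drop_eq hiy hyx (hwy.symm.trans hwx)).trans (by omega)⟩

open Classical in
noncomputable def claimSet (f : KVert k h → ℕ) (v : KVert k h) : Finset (KVert k h) :=
  {w ∈ evenHeight k h | 0 < f v ∧ Claims (f v) v w}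

lemma pow_le_card_claimSet {f : KVert k h → ℕ} {v : KVert k h} (hv : 0 < f v) {j t : ℕ}
    (hjt : j ≤ t) (hjtv : j + t ≤ f v) (hth : v.1.length - j + t ≤ h)
    (hpar : (v.1.length - j + t) % 2 = h % 2) : k ^ t ≤ #(claimSet f v) := by
  have hlen : ∀ g : Fin t → Fin k, (List.ofFn g ++ v.1.drop j).length = v.1.length - j + t := by
    intro g; simp; omega
  let extend (g : Fin t → Fin k) : KVert k h :=
    ⟨List.ofFn g ++ v.1.drop j, (hlen g).trans_le hth⟩
  calc k ^ t = #(univ : Finset (Fin t → Fin k)) := by simp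
    _ ≤ #(claimSet f v) := card_le_card_of_injOn extend
        (fun g _ => by
          simp only [claimSet, coe_filter, Set.mem_ofPred_eq, mem_evenHeight]
          exact ⟨(hlen g).symm ▸ hpar, hv, List.ofFn g, j, by simpa using hjt,
            by simpa using hjtv, rfl⟩)
        (fun g _ g' _ he =>
          List.ofFn_injective (List.append_cancel_right (congrArg Subtype.val he)))

/-- The vertices claimed by a vertex at level `L` with power `p` are taken `t` levels below its
ancestor `j` levels up. -/
lemma exists_claim_depths {p L : ℕ} (hp : 1 ≤ p) (hpL : p ≤ h + L) (hL : L ≤ h) :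
    ∃ j t, j ≤ t ∧ j + t ≤ p ∧ L - j + t ≤ h ∧ (L - j + t) % 2 = h % 2 ∧ p ≤ 2 * t + 1 := by
  by_cases hps : p ≤ h - L
  · exact ⟨0, p - (h - L - p) % 2, by omega⟩
  · exact ⟨min ((p - (h - L)) / 2) L, h - L + min ((p - (h - L)) / 2) L, by omega⟩

lemma le_card_claimSet (hk : 3 ≤ k) {f : KVert k h → ℕ} (hf : IsBroadcast (karyTree k h) f)
    (v : KVert k h) : f v ≤ #(claimSet f v) := by
  rcases Nat.eq_zero_or_pos (f v) with hv | hv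
  · omega
  obtain ⟨j, t, hjt, hjtv, hth, hpar, hpt⟩ :=
    exists_claim_depths hv ((hf v).trans (ecc_le v)) v.2
  calc f v ≤ 1 + t * 2 := by omega
    _ ≤ 3 ^ t := one_add_le_pow_of_two_add_nonneg (Nat.zero_le _) t
    _ ≤ k ^ t := Nat.pow_le_pow_left hk t
    _ ≤ #(claimSet f v) := pow_le_card_claimSet hv hjt hjtv hth hpar

lemma sum_le_card_evenHeight (hk : 3 ≤ k) {f : KVert k h → ℕ}
    (hf : IsIndepBroadcast (karyTree k h) f) : ∑ v, f v ≤ #(evenHeight k h) := by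
  classical
  have hdisj : (Set.univ : Set (KVert k h)).PairwiseDisjoint (claimSet f) := by
    intro u _ v _ huv
    refine disjoint_left.2 fun w hwu hwv => ?_
    simp only [claimSet, mem_filter] at hwu hwv
    exact not_claims_of_isIndepBroadcast hf huv hwu.2.1 hwv.2.1 hwu.2.2 hwv.2.2
  calc ∑ v, f v ≤ ∑ v, #(claimSet f v) := sum_le_sum fun v _ => le_card_claimSet hk hf.1 v
    _ = #(univ.biUnion (claimSet f)) := (card_biUnion (by simpa using hdisj)).symm
    _ ≤ #(evenHeight k h) := card_le_card (biUnion_subset.2 fun v _ => filter_subset _ _)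

end karyTree

/-- for a perfect `k`-ary tree with `k ≥ 3` and `h ≥ 1`, the broadcast
independence number equals the independence number; explicitly it is
`(k^(2(m+1)) - 1)/(k^2 - 1)` when `h = 2m` and `k` times that when `h = 2m + 1`. -/
theorem stmt7 (k h : ℕ) (hk : 3 ≤ k) (hh : 1 ≤ h) :
    alphaB (karyTree k h) = indepNum (karyTree k h) ∧
    (∀ m : ℕ, h = 2 * m →
      alphaB (karyTree k h) = (k ^ (2 * (m + 1)) - 1) / (k ^ 2 - 1)) ∧
    (∀ m : ℕ, h = 2 * m + 1 →
      alphaB (karyTree k h) = k * ((k ^ (2 * (m + 1)) - 1) / (k ^ 2 - 1))) := by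
  have := karyTree.nontrivial (k := k) (h := h) (by omega) hh
  have hindep := karyTree.card_evenHeight_le_indepNum (k := k) (h := h)
  have hB : alphaB (karyTree k h) = #(karyTree.evenHeight k h) :=
    le_antisymm (alphaB_le fun _ => karyTree.sum_le_card_evenHeight hk)
      (hindep.trans (indepNum_le_alphaB karyTree.connected))
  have hcard := karyTree.card_evenHeight (k := k) (h := h) (by omega)
  refine ⟨le_antisymm (hB ▸ hindep) (indepNum_le_alphaB karyTree.connected), ?_, ?_⟩
  · rintro m rfl
    rw [hB, hcard, Nat.mul_mod_right, Nat.mul_div_cancel_left m two_pos, pow_zero, one_mul]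
  · rintro m rfl
    rw [hB, hcard, show (2 * m + 1) % 2 = 1 by omega, show (2 * m + 1) / 2 = m by omega, pow_one]
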